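/- arXiv:math/0701247 — 3 statements merged into one kernel-verified Lean document; each statement's English description precedes it below -/
import Mathlib

section
/- For every integer i ≥ 1, the denominator of the Bernoulli number B_{2i} (written in lowest terms) equals the product of all primes p such that p − 1 divides 2i. In particular, this denominator is squarefree. -/
/-!
By von Staudt–Clausen, `B_{2i} + ∑ 1/p` is an integer, the sum running over the primes `p`
with `(p - 1) ∣ 2i`. Hence `B_{2i}` and `-∑ 1/p` have the same denominator, and a sum of
rationals with pairwise coprime denominators has the product of these as its denominator.
-/

open Finset

namespace Rat

theorem den_add_eq_mul_of_coprime {q r : ℚ} (h : q.den.Coprime r.den) :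
    (q + r).den = q.den * r.den := by
  refine Nat.dvd_antisymm (add_den_dvd q r) (h.mul_dvd_of_dvd_of_dvd ?_ ?_)
  · have hq : q.den ∣ (q + r).den * r.den := by
      simpa using add_den_dvd (q + r) (-r)
    exact h.dvd_of_dvd_mul_right hq
  · have hr : r.den ∣ (q + r).den * q.den := by
      simpa using add_den_dvd (q + r) (-q)
    exact h.symm.dvd_of_dvd_mul_right hr

theorem den_sum_eq_prod_den {ι : Type*} {s : Finset ι} {f : ι → ℚ}
    (hs : (s : Set ι).Pairwise fun i j => (f i).den.Coprime (f j).den) :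
    (∑ i ∈ s, f i).den = ∏ i ∈ s, (f i).den := by
  induction s using Finset.cons_induction with
  | empty => simp
  | cons a s ha ih =>
    rw [coe_cons, Set.pairwise_insert] at hs
    have hcop : (f a).den.Coprime (∏ i ∈ s, (f i).den) :=
      Nat.Coprime.prod_right fun i hi => (hs.2 i hi fun h => ha (h ▸ hi)).1
    rw [sum_cons, prod_cons, den_add_eq_mul_of_coprime (ih hs.1 ▸ hcop), ih hs.1]

end Rat

theorem den_sum_one_div_primes {s : Finset ℕ} (hs : ∀ p ∈ s, p.Prime) :
    (∑ p ∈ s, (1 : ℚ) / p).den = ∏ p ∈ s, p := by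
  have hden : ∀ p ∈ s, ((1 : ℚ) / p).den = p := fun p hp => by simp [(hs p hp).ne_zero]
  rw [Rat.den_sum_eq_prod_den, prod_congr rfl hden]
  intro p hp q hq hpq
  rw [hden p hp, hden q hq]
  exact (Nat.coprime_primes (hs p hp) (hs q hq)).2 hpq

theorem squarefree_prod_primes {s : Finset ℕ} (hs : ∀ p ∈ s, p.Prime) :
    Squarefree (∏ p ∈ s, p) := by
  refine squarefree_prod_of_pairwise_isCoprime (fun p hp q hq hpq => ?_)
    fun p hp => (hs p hp).squarefree
  exact Nat.coprime_iff_isRelPrime.1 ((Nat.coprime_primes (hs p hp) (hs q hq)).2 hpq)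

theorem bernoulli_den_eq_prod_primes_general (i : ℕ) :
    (bernoulli (2 * i)).den =
      (∏ p ∈ Finset.filter (fun p => p.Prime ∧ (p - 1) ∣ 2 * i) (Finset.range (2 * i + 2)), p)
    ∧ Squarefree (bernoulli (2 * i)).den := by
  set P := Finset.filter (fun p => p.Prime ∧ (p - 1) ∣ 2 * i) (Finset.range (2 * i + 2))
  have hP : ∀ p ∈ P, p.Prime := fun p hp => (mem_filter.1 hp).2.1
  obtain ⟨z, hz⟩ := Bernoulli.vonStaudt_clausen i
  have hden : (bernoulli (2 * i)).den = ∏ p ∈ P, p := by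
    rw [eq_sub_of_add_eq hz.symm, Rat.intCast_sub_den, den_sum_one_div_primes hP]
  exact ⟨hden, hden ▸ squarefree_prod_primes hP⟩

/-- **Von Staudt–Clausen (denominator form).** For every `i ≥ 1`, the denominator of the
Bernoulli number `B (2*i)` (in lowest terms) equals the product of all primes `p` with
`(p - 1) ∣ 2*i`; in particular this denominator is squarefree. -/
theorem bernoulli_den_eq_prod_primes (i : ℕ) (hi : 1 ≤ i) :
    (bernoulli (2 * i)).den =
      (∏ p ∈ Finset.filter (fun p => p.Prime ∧ (p - 1) ∣ 2 * i) (Finset.range (2 * i + 2)), p)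
    ∧ Squarefree (bernoulli (2 * i)).den :=
  bernoulli_den_eq_prod_primes_general i
end

section
/- For every integer i ≥ 1, ν_2(1 − (−5)^{2i}) = 1 + ν_2(den(B_{2i}/(2i))); that is, the 2-adic valuation of the integer 1 − 5^{2i} exceeds the 2-adic valuation of the denominator of B_{2i}/(2i) by exactly one. -/
/-!
Lifting the exponent gives `ν₂(5^(2i) - 1) = ν₂(6) + ν₂(4) + ν₂(2i) - 1 = 3 + ν₂(i)`.
On the other side, von Staudt–Clausen makes `B_{2i} + 1/2` a `2`-adic integer, so
`ν₂(B_{2i}) = -1` and `ν₂(B_{2i}/(2i)) = -2 - ν₂(i)`; a negative valuation of a reduced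
fraction sits entirely in its denominator.
-/

open Finset

theorem padicValRat_nonneg_of_not_dvd_den {p : ℕ} {q : ℚ} (h : ¬p ∣ q.den) :
    0 ≤ padicValRat p q := by
  rw [padicValRat_def, padicValNat.eq_zero_of_not_dvd h]
  simp

theorem padicValNat_den_eq_neg_padicValRat {p : ℕ} [hp : Fact p.Prime] {q : ℚ}
    (hq : padicValRat p q < 0) : (padicValNat p q.den : ℤ) = -padicValRat p q := by
  have hden : p ∣ q.den := by
    by_contra h
    exact hq.not_ge (padicValRat_nonneg_of_not_dvd_den h)
  have hnum : ¬(p : ℤ) ∣ q.num := fun hnum =>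
    hp.out.not_dvd_one (q.reduced ▸ Nat.dvd_gcd (Int.natCast_dvd.mp hnum) hden)
  rw [padicValRat_def, padicValInt.eq_zero_of_not_dvd hnum]
  ring

theorem padicValRat_inv_self (p : ℕ) [Fact p.Prime] : padicValRat p (p : ℚ)⁻¹ = -1 := by
  simp [padicValRat.inv, padicValRat.self (Fact.out : p.Prime).one_lt]

theorem padicValRat_eq_neg_one_of_not_dvd_den_add_inv {p : ℕ} [hp : Fact p.Prime] {x : ℚ}
    (h : ¬p ∣ (x + (p : ℚ)⁻¹).den) : padicValRat p x = -1 := by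
  set y := x + (p : ℚ)⁻¹ with hy
  have hvy : 0 ≤ padicValRat p y := padicValRat_nonneg_of_not_dvd_den h
  have hvinv : padicValRat p (-(p : ℚ)⁻¹) = -1 := by rw [padicValRat.neg, padicValRat_inv_self]
  have hx : x = -(p : ℚ)⁻¹ + y := by rw [hy]; ring
  by_cases hy0 : y = 0
  · rw [hx, hy0, add_zero, hvinv]
  have hx0 : x ≠ 0 := by
    intro hx0
    rw [hx0, zero_add] at hy
    rw [hy, padicValRat_inv_self] at hvy
    omega
  have hinv : -(p : ℚ)⁻¹ ≠ 0 := by simp [hp.out.ne_zero]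
  rw [hx] at hx0 ⊢
  rw [padicValRat.add_eq_of_lt hx0 hinv hy0 (by omega), hvinv]

theorem not_dvd_den_bernoulli_add_inv {k p : ℕ} [hp : Fact p.Prime] (hk : 0 < k)
    (hpk : p - 1 ∣ 2 * k) : ¬p ∣ (bernoulli (2 * k) + (p : ℚ)⁻¹).den := by
  obtain ⟨N, hN⟩ := Bernoulli.vonStaudt_clausen k
  set S := (range (2 * k + 2)).filter fun q => q.Prime ∧ (q - 1) ∣ 2 * k
  have hpS : p ∈ S := by
    have := Nat.le_of_dvd (by omega) hpk
    simp only [S, mem_filter, mem_range]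
    exact ⟨by omega, hp.out, hpk⟩
  have hsplit : bernoulli (2 * k) + (p : ℚ)⁻¹ = N - ∑ q ∈ S.erase p, (1 : ℚ) / q := by
    rw [hN, ← add_sum_erase S _ hpS, one_div]
    ring
  rw [hsplit, ← Rat.padicValuation_le_one_iff]
  refine (Rat.padicValuation p).map_sub_le (Int.padicValuation_le_one p N) ?_
  refine (Rat.padicValuation p).map_sum_le fun q hq => ?_
  obtain ⟨hqp, -, hq, -⟩ := by simpa [S] using hq
  rw [Rat.padicValuation_le_one_iff, one_div, Rat.inv_natCast_den_of_pos hq.pos]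
  exact (Nat.prime_dvd_prime_iff_eq hp.out hq).not.mpr (Ne.symm hqp)

theorem padicValRat_bernoulli {k p : ℕ} [Fact p.Prime] (hk : 0 < k) (hpk : p - 1 ∣ 2 * k) :
    padicValRat p (bernoulli (2 * k)) = -1 :=
  padicValRat_eq_neg_one_of_not_dvd_den_add_inv (not_dvd_den_bernoulli_add_inv hk hpk)

theorem padicValInt_one_sub_neg_pow_of_even (p : ℕ) {x n : ℕ} (hx : 0 < x) (hn : Even n) :
    padicValInt p (1 - (-x : ℤ) ^ n) = padicValNat p (x ^ n - 1) := by
  rw [hn.neg_pow, padicValInt, ← Int.natAbs_neg, neg_sub, ← Nat.cast_pow,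
    ← Nat.cast_one, ← Nat.cast_sub (Nat.one_le_pow _ _ hx), Int.natAbs_natCast]

theorem padicValNat_two_five_pow_sub_one {n : ℕ} (hn : n ≠ 0) (he : Even n) :
    padicValNat 2 (5 ^ n - 1) = 2 + padicValNat 2 n := by
  have hlte := padicValNat.pow_two_sub_one (x := 5) (by norm_num) (by decide) hn he
  have h6 : padicValNat 2 (5 + 1) = 1 := by
    rw [show 5 + 1 = 2 * 3 by rfl, padicValNat.mul two_ne_zero three_ne_zero]
    simp
  have h4 : padicValNat 2 (5 - 1) = 2 := padicValNat.prime_pow (p := 2) 2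
  omega

/-- For every `i ≥ 1`, the 2-adic valuation of `1 - (-5)^(2*i)` exceeds the 2-adic valuation
of the denominator of `B (2*i) / (2*i)` by exactly one. -/
theorem padicValInt_two_eq_one_add (i : ℕ) (hi : 1 ≤ i) :
    padicValInt 2 (1 - (-5 : ℤ) ^ (2 * i)) =
      1 + padicValNat 2 (bernoulli (2 * i) / (2 * i : ℚ)).den := by
  have h2i : padicValNat 2 (2 * i) = 1 + padicValNat 2 i := by
    rw [padicValNat.mul two_ne_zero (by omega), padicValNat_self]
  have hL : padicValInt 2 (1 - (-5 : ℤ) ^ (2 * i)) = 3 + padicValNat 2 i := by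
    have := padicValInt_one_sub_neg_pow_of_even 2 (x := 5) (by norm_num) (even_two_mul i)
    rw [padicValNat_two_five_pow_sub_one (by omega) (even_two_mul i), h2i] at this
    exact_mod_cast this.trans (by ring)
  have hR : padicValRat 2 (bernoulli (2 * i) / (2 * i : ℚ)) = -2 - padicValNat 2 i := by
    have hB := padicValRat_bernoulli (p := 2) hi (one_dvd _)
    have hB0 : bernoulli (2 * i) ≠ 0 := by rintro h; simp [h] at hB
    rw [show (2 * i : ℚ) = ((2 * i : ℕ) : ℚ) by push_cast; rfl,
      padicValRat.div hB0 (by positivity), hB, padicValRat.of_nat, h2i]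
    push_cast
    ring
  have hden := padicValNat_den_eq_neg_padicValRat (p := 2) (q := bernoulli (2 * i) / (2 * i : ℚ))
    (by omega)
  omega
end

section
/- Let q ≥ 1 be an integer, let p_0, p_1, …, p_k be distinct complex numbers, and let n_0, n_1, …, n_k be positive integers with gcd(q, n_i) = 1 for every i. Let f = ∏_{i=0}^{k} (z − p_i)^{n_i}, regarded as an element of the field ℂ(z) of rational functions over ℂ. Then the polynomial T^q − f is irreducible over ℂ(z). -/
/-!
If `X ^ q - C a` had an irreducible factor `g` of degree `d < q`, the norm `N` of a root of `g`
would satisfy `N ^ q = a ^ d`. For `a = f` this is impossible: writing `N` as a quotient of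
polynomials and comparing orders of vanishing at `p₀` gives `q ∣ d * n₀`, hence `q ∣ d`.
-/

open Polynomial

theorem X_pow_sub_C_irreducible_of_forall_pow_eq_pow_dvd {K : Type*} [Field K] {q : ℕ}
    (hq : 0 < q) {a : K} (h : ∀ (b : K) (d : ℕ), b ^ q = a ^ d → q ∣ d) :
    Irreducible (X ^ q - C a) := by
  have hne : X ^ q - C a ≠ 0 := X_pow_sub_C_ne_zero hq a
  have hnu : ¬ IsUnit (X ^ q - C a) := by
    rw [isUnit_iff_degree_eq_zero, degree_X_pow_sub_C hq, Nat.cast_eq_zero]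
    exact hq.ne'
  obtain ⟨g, hg, hgdvd⟩ := WfDvdMonoid.exists_irreducible_factor hnu hne
  have : Fact (Irreducible g) := ⟨hg⟩
  have hnorm : Algebra.norm K (AdjoinRoot.root g) ^ q = a ^ g.natDegree := by
    have := eval₂_eq_zero_of_dvd_of_eval₂_eq_zero _ _ hgdvd (AdjoinRoot.eval₂_root g)
    rw [eval₂_sub, eval₂_pow, eval₂_C, eval₂_X, sub_eq_zero] at this
    rw [← map_pow, this, ← AdjoinRoot.algebraMap_eq, Algebra.norm_algebraMap,
      (AdjoinRoot.powerBasis hg.ne_zero).finrank, AdjoinRoot.powerBasis_dim hg.ne_zero]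
  have hdeg : q ≤ g.natDegree := Nat.le_of_dvd hg.natDegree_pos (h _ _ hnorm)
  exact (associated_of_dvd_of_natDegree_le hgdvd hne
    (natDegree_X_pow_sub_C.trans_le hdeg)).irreducible hg

theorem RatFunc.dvd_of_pow_eq_algebraMap_pow {K : Type*} [Field K] {F : K[X]} (hF : F ≠ 0)
    {x : K} {q d : ℕ} (hq : q.Coprime (F.rootMultiplicity x)) {b : RatFunc K}
    (hb : b ^ q = algebraMap K[X] (RatFunc K) F ^ d) : q ∣ d := by
  classical
  have hpoly : b.num ^ q = F ^ d * b.denom ^ q := by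
    apply IsFractionRing.injective K[X] (RatFunc K)
    have hnum : algebraMap K[X] (RatFunc K) b.num = b * algebraMap K[X] (RatFunc K) b.denom :=
      (div_eq_iff (RatFunc.algebraMap_ne_zero b.denom_ne_zero)).mp (RatFunc.num_div_denom b)
    rw [map_pow, hnum, mul_pow, hb, map_mul, map_pow, map_pow]
  have hne : F ^ d * b.denom ^ q ≠ 0 :=
    mul_ne_zero (pow_ne_zero _ hF) (pow_ne_zero _ b.denom_ne_zero)
  have hmult := congrArg (fun P ↦ P.roots.count x) hpoly
  simp only [roots_pow, roots_mul hne, Multiset.count_add, Multiset.count_nsmul, count_roots]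
    at hmult
  have : q ∣ d * F.rootMultiplicity x :=
    (Nat.dvd_add_left (Dvd.intro _ rfl)).mp (hmult ▸ Dvd.intro _ rfl)
  exact hq.dvd_of_dvd_mul_right this

theorem rootMultiplicity_prod_X_sub_C_pow {K : Type*} [Field K] {ι : Type*} [Fintype ι]
    {p : ι → K} (hp : Function.Injective p) (n : ι → ℕ) (j : ι) :
    (∏ i, (X - C (p i)) ^ n i).rootMultiplicity (p j) = n j := by
  classical
  rw [← count_roots, roots_prod _ _
    (Finset.prod_ne_zero_iff.mpr fun i _ ↦ pow_ne_zero _ (X_sub_C_ne_zero _))]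
  simp [roots_pow, Multiset.count_bind, Multiset.count_singleton, hp.eq_iff]

theorem X_pow_sub_C_prod_irreducible_general (q k : ℕ) (hq : 1 ≤ q)
    (p : Fin (k + 1) → ℂ) (hp : Function.Injective p)
    (n : Fin (k + 1) → ℕ) (hgcd : ∀ i, Nat.gcd q (n i) = 1)
    (f : RatFunc ℂ) (hf : f = ∏ i, (RatFunc.X - RatFunc.C (p i)) ^ (n i)) :
    Irreducible (Polynomial.X ^ q - Polynomial.C f) := by
  set F : ℂ[X] := ∏ i, (X - C (p i)) ^ n i
  have hfF : f = algebraMap ℂ[X] (RatFunc ℂ) F := by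
    simp only [hf, F, map_prod, map_pow, map_sub, RatFunc.algebraMap_X, RatFunc.algebraMap_C]
  have hF : F ≠ 0 := Finset.prod_ne_zero_iff.mpr fun i _ ↦ pow_ne_zero _ (X_sub_C_ne_zero _)
  have hcop : q.Coprime (F.rootMultiplicity (p 0)) := by
    rw [rootMultiplicity_prod_X_sub_C_pow hp n 0]
    exact hgcd 0
  refine X_pow_sub_C_irreducible_of_forall_pow_eq_pow_dvd hq fun b d hb ↦ ?_
  exact RatFunc.dvd_of_pow_eq_algebraMap_pow hF hcop (hfF ▸ hb)

/-- Let `q ≥ 1`, let `p₀, …, p_k` be distinct complex numbers and `n₀, …, n_k` positive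
integers with `gcd q nᵢ = 1` for all `i`. With `f = ∏ i, (z - pᵢ)^(nᵢ) ∈ ℂ(z)`, the
polynomial `T^q - f` is irreducible over `ℂ(z)`. -/
theorem X_pow_sub_C_prod_irreducible (q k : ℕ) (hq : 1 ≤ q)
    (p : Fin (k + 1) → ℂ) (hp : Function.Injective p)
    (n : Fin (k + 1) → ℕ) (hn : ∀ i, 0 < n i) (hgcd : ∀ i, Nat.gcd q (n i) = 1)
    (f : RatFunc ℂ) (hf : f = ∏ i, (RatFunc.X - RatFunc.C (p i)) ^ (n i)) :
    Irreducible (Polynomial.X ^ q - Polynomial.C f) :=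
  X_pow_sub_C_prod_irreducible_general q k hq p hp n hgcd f hf
end
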